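/- arXiv:2603.27893 — 2 statements merged into one kernel-verified Lean document; each statement's English description precedes it below -/
import Mathlib

section
/- (Lyapunov stability estimate in Theorem 1(b).) Under the hypotheses of the closed-loop Theorem 1 setting (ℓ ≥ 0, V_f ≥ 0, terminal conditions, 0 ≤ a < 1, 1 ≤ M ≤ N, a K-function α₁ with ℓ(y,w) ≥ α₁(‖y‖) for all y ∈ 𝕏, w ∈ 𝕌, and a closed-loop trajectory x(k+1) = f(x(k), u_k(0)) with u_k (a,M)-admissible at x(k) relative to an optimal pair for P_N(x(k))), suppose in addition there is a K-function β such that V_N*(y) ≤ β(‖y‖) for every y from which the N-feasible set is nonempty. Then α₁(‖x(k)‖) ≤ β(‖x(0)‖) for all k ∈ ℕ. -/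
section Framework

variable {S I : Type*}

/-- The trajectory generated by dynamics `f` from initial state `x` under input sequence `v`. -/
def traj (f : S → I → S) (x : S) (v : ℕ → I) : ℕ → S
  | 0 => x
  | k + 1 => f (traj f x v k) (v k)

/-- `v` is an `N`-feasible input sequence from `x`. -/
def Feasible (f : S → I → S) (X : Set S) (U : Set I) (Xf : Set S)
    (N : ℕ) (x : S) (v : ℕ → I) : Prop :=
  (∀ i < N, traj f x v i ∈ X ∧ v i ∈ U) ∧ traj f x v N ∈ Xf

/-- The MPC cost `V_N(x, v)`. -/
noncomputable def mpcCost (f : S → I → S) (l : S → I → ℝ) (Vf : S → ℝ)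
    (N : ℕ) (x : S) (v : ℕ → I) : ℝ :=
  (∑ i ∈ Finset.range N, l (traj f x v i) (v i)) + Vf (traj f x v N)

/-- `(v, z)` is an optimal pair for the problem `P_N(x)`. -/
def OptPair (f : S → I → S) (X : Set S) (U : Set I) (Xf : Set S)
    (l : S → I → ℝ) (Vf : S → ℝ) (N : ℕ) (x : S) (v : ℕ → I) (z : ℕ → S) : Prop :=
  Feasible f X U Xf N x v ∧ (∀ i, z i = traj f x v i) ∧
    ∀ w, Feasible f X U Xf N x w → mpcCost f l Vf N x v ≤ mpcCost f l Vf N x w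

/-- `u` is an `(a, M)`-admissible input sequence at `x`, relative to the optimal pair `(v, z)`. -/
def Adm (f : S → I → S) (X : Set S) (U : Set I) (l : S → I → ℝ)
    (a : ℝ) (M : ℕ) (x : S) (v : ℕ → I) (z : ℕ → S) (u : ℕ → I) : Prop :=
  (∀ i < M, traj f x u i ∈ X ∧ u i ∈ U) ∧
  ((∑ i ∈ Finset.range M, l (traj f x u i) (u i))
      - ∑ i ∈ Finset.range M, l (z i) (v i)) ≤ a * l x (u 0) ∧
  traj f x u M = z M

/-- The safety–stability set `𝕊(x)`. -/
def S2Set (f : S → I → S) (X : Set S) (U : Set I) (l : S → I → ℝ)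
    (a : ℝ) (M : ℕ) (x : S) (v : ℕ → I) (z : ℕ → S) : Set I :=
  {w | ∃ u, Adm f X U l a M x v z u ∧ u 0 = w}

/-- The value function `V_N^*`. -/
noncomputable def VStar (f : S → I → S) (X : Set S) (U : Set I) (Xf : Set S)
    (l : S → I → ℝ) (Vf : S → ℝ) (N : ℕ) (y : S) : ℝ :=
  sInf (mpcCost f l Vf N y '' {v | Feasible f X U Xf N y v})

/-- A K-function: continuous, strictly increasing on `[0, ∞)`, vanishing at `0`. -/
def IsKFun (α : ℝ → ℝ) : Prop :=
  Continuous α ∧ StrictMonoOn α (Set.Ici 0) ∧ α 0 = 0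

end Framework

/-!
Along the closed loop the optimal value `V_N*` decreases. At a state `x` with optimal inputs `v`,
append the terminal control to `v`, replace the first `M` inputs by the admissible `u` (both reach
`z*(M)`), and drop the first step: the result is feasible from `f x (u 0)` and costs at most
`V_N*(x) - (1 - a) ℓ(x, u(0))`. Hence `α₁(‖x k‖) ≤ ℓ(x k, ·) ≤ V_N*(x k) ≤ V_N*(x 0) ≤ β(‖x 0‖)`.
-/

open Finset

section

variable {S I : Type*} {f : S → I → S} {X : Set S} {U : Set I} {Xf : Set S}
  {l : S → I → ℝ} {Vf : S → ℝ} {N M : ℕ} {x : S} {u v : ℕ → I}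

theorem piecewise_Iio_of_lt {i : ℕ} (hi : i < M) : (Set.Iio M).piecewise u v i = u i :=
  Set.piecewise_eq_of_mem _ _ _ (Set.mem_Iio.2 hi)

theorem piecewise_Iio_of_ge {i : ℕ} (hi : M ≤ i) : (Set.Iio M).piecewise u v i = v i :=
  Set.piecewise_eq_of_notMem _ _ _ (Set.notMem_Iio.2 hi)

theorem traj_piecewise_of_le {i : ℕ} (hi : i ≤ M) :
    traj f x ((Set.Iio M).piecewise u v) i = traj f x u i := by
  induction i with
  | zero => rfl
  | succ i ih => simp only [traj, ih (by omega), piecewise_Iio_of_lt (Nat.lt_of_succ_le hi)]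

theorem traj_piecewise_of_ge (hM : traj f x u M = traj f x v M) {i : ℕ} (hi : M ≤ i) :
    traj f x ((Set.Iio M).piecewise u v) i = traj f x v i := by
  induction i, hi using Nat.le_induction with
  | base => rw [traj_piecewise_of_le le_rfl, hM]
  | succ i hMi ih => simp only [traj, ih, piecewise_Iio_of_ge hMi]

theorem sum_range_piecewise_of_le {n : ℕ} (hn : n ≤ M) :
    ∑ i ∈ range n, l (traj f x ((Set.Iio M).piecewise u v) i) ((Set.Iio M).piecewise u v i) =
      ∑ i ∈ range n, l (traj f x u i) (u i) :=
  sum_congr rfl fun i hi => by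
    have hiM : i < M := (mem_range.1 hi).trans_le hn
    rw [traj_piecewise_of_le hiM.le, piecewise_Iio_of_lt hiM]

theorem Feasible.piecewise (hv : Feasible f X U Xf N x v) (hMN : M ≤ N)
    (hu : ∀ i < M, traj f x u i ∈ X ∧ u i ∈ U) (hM : traj f x u M = traj f x v M) :
    Feasible f X U Xf N x ((Set.Iio M).piecewise u v) := by
  refine ⟨fun i hi => ?_, ?_⟩
  · rcases lt_or_ge i M with hiM | hiM
    · rw [traj_piecewise_of_le hiM.le, piecewise_Iio_of_lt hiM]
      exact hu i hiM
    · rw [traj_piecewise_of_ge hM hiM, piecewise_Iio_of_ge hiM]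
      exact hv.1 i hi
  · rw [traj_piecewise_of_ge hM hMN]
    exact hv.2

theorem mpcCost_piecewise (hMN : M ≤ N) (hM : traj f x u M = traj f x v M) :
    mpcCost f l Vf N x ((Set.Iio M).piecewise u v) =
      mpcCost f l Vf N x v + ((∑ i ∈ range M, l (traj f x u i) (u i)) -
        ∑ i ∈ range M, l (traj f x v i) (v i)) := by
  have tail : ∑ i ∈ Ico M N, l (traj f x ((Set.Iio M).piecewise u v) i)
      ((Set.Iio M).piecewise u v i) = ∑ i ∈ Ico M N, l (traj f x v i) (v i) :=
    sum_congr rfl fun i hi => by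
      have hiM := (mem_Ico.1 hi).1
      rw [traj_piecewise_of_ge hM hiM, piecewise_Iio_of_ge hiM]
  simp only [mpcCost, ← sum_range_add_sum_Ico _ hMN, sum_range_piecewise_of_le le_rfl, tail,
    traj_piecewise_of_ge hM hMN]
  ring

theorem Feasible.exists_extend (hXfX : Xf ⊆ X)
    (hterm : ∀ y ∈ Xf, ∃ w ∈ U, f y w ∈ Xf ∧ Vf (f y w) ≤ Vf y - l y w)
    (hv : Feasible f X U Xf N x v) :
    ∃ w, Feasible f X U Xf (N + 1) x ((Set.Iio N).piecewise v fun _ => w) ∧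
      mpcCost f l Vf (N + 1) x ((Set.Iio N).piecewise v fun _ => w) ≤ mpcCost f l Vf N x v := by
  obtain ⟨w, hwU, hwXf, hwVf⟩ := hterm _ hv.2
  have hN : traj f x ((Set.Iio N).piecewise v fun _ => w) N = traj f x v N :=
    traj_piecewise_of_le le_rfl
  have hwN : ((Set.Iio N).piecewise v fun _ => w) N = w := piecewise_Iio_of_ge le_rfl
  refine ⟨w, ⟨fun i hi => ?_, ?_⟩, ?_⟩
  · rcases lt_or_eq_of_le (Nat.lt_succ_iff.1 hi) with hiN | rfl
    · rw [traj_piecewise_of_le hiN.le, piecewise_Iio_of_lt hiN]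
      exact hv.1 i hiN
    · rw [hN, hwN]
      exact ⟨hXfX hv.2, hwU⟩
  · simpa only [traj, hN, hwN] using hwXf
  · simp only [mpcCost, sum_range_succ, sum_range_piecewise_of_le le_rfl, traj, hN, hwN]
    linarith

theorem traj_tail (i : ℕ) :
    traj f (f x (v 0)) (fun i => v (i + 1)) i = traj f x v (i + 1) := by
  induction i with
  | zero => rfl
  | succ i ih => simp only [traj, ih]

theorem Feasible.tail (hv : Feasible f X U Xf (N + 1) x v) :
    Feasible f X U Xf N (f x (v 0)) fun i => v (i + 1) :=
  ⟨fun i hi => traj_tail (f := f) i ▸ hv.1 (i + 1) (by omega), traj_tail (f := f) N ▸ hv.2⟩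

theorem mpcCost_succ :
    mpcCost f l Vf (N + 1) x v = l x (v 0) + mpcCost f l Vf N (f x (v 0)) fun i => v (i + 1) := by
  simp only [mpcCost, sum_range_succ', traj_tail]
  rw [traj]
  ring

theorem mpcCost_nonneg (hl : ∀ y w, 0 ≤ l y w) (hVf : ∀ y, 0 ≤ Vf y) :
    0 ≤ mpcCost f l Vf N x v :=
  add_nonneg (sum_nonneg fun _ _ => hl _ _) (hVf _)

theorem l_le_mpcCost (hl : ∀ y w, 0 ≤ l y w) (hVf : ∀ y, 0 ≤ Vf y) (hN : 0 < N) :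
    l x (v 0) ≤ mpcCost f l Vf N x v :=
  le_add_of_le_of_nonneg
    (single_le_sum (f := fun i => l (traj f x v i) (v i)) (fun _ _ => hl _ _) (mem_range.2 hN))
    (hVf _)

theorem VStar_le_mpcCost (hl : ∀ y w, 0 ≤ l y w) (hVf : ∀ y, 0 ≤ Vf y)
    (hv : Feasible f X U Xf N x v) : VStar f X U Xf l Vf N x ≤ mpcCost f l Vf N x v :=
  csInf_le ⟨0, by rintro _ ⟨w, -, rfl⟩; exact mpcCost_nonneg hl hVf⟩ ⟨v, hv, rfl⟩

theorem OptPair.VStar_eq {z : ℕ → S} (hopt : OptPair f X U Xf l Vf N x v z) :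
    VStar f X U Xf l Vf N x = mpcCost f l Vf N x v :=
  IsLeast.csInf_eq ⟨⟨v, hopt.1, rfl⟩, by rintro _ ⟨w, hw, rfl⟩; exact hopt.2.2 w hw⟩

theorem OptPair.VStar_next_add_le {a : ℝ} {z : ℕ → S} (hl : ∀ y w, 0 ≤ l y w)
    (hVf : ∀ y, 0 ≤ Vf y) (hXfX : Xf ⊆ X)
    (hterm : ∀ y ∈ Xf, ∃ w ∈ U, f y w ∈ Xf ∧ Vf (f y w) ≤ Vf y - l y w)
    (hM1 : 1 ≤ M) (hMN : M ≤ N)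
    (hopt : OptPair f X U Xf l Vf N x v z) (hadm : Adm f X U l a M x v z u) :
    VStar f X U Xf l Vf N (f x (u 0)) + (1 - a) * l x (u 0) ≤ VStar f X U Xf l Vf N x := by
  obtain ⟨huXU, hucost, huM⟩ := hadm
  have hz := hopt.2.1
  obtain ⟨w, hext, hextcost⟩ := hopt.1.exists_extend hXfX hterm
  set v' := (Set.Iio N).piecewise v fun _ => w
  have hv'M : traj f x u M = traj f x v' M := by rw [huM, hz, traj_piecewise_of_le hMN]
  have hv'sum : ∑ i ∈ range M, l (traj f x v' i) (v' i) = ∑ i ∈ range M, l (z i) (v i) := by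
    simp only [hz, v', sum_range_piecewise_of_le hMN]
  set c := (Set.Iio M).piecewise u v'
  have hc0 : c 0 = u 0 := piecewise_Iio_of_lt hM1
  have hcfeas : Feasible f X U Xf N (f x (u 0)) fun i => c (i + 1) :=
    hc0 ▸ (hext.piecewise (by omega) huXU hv'M).tail
  have hccost : l x (u 0) + mpcCost f l Vf N (f x (u 0)) (fun i => c (i + 1)) ≤
      mpcCost f l Vf N x v + a * l x (u 0) := by
    rw [← hc0, ← mpcCost_succ, hc0, mpcCost_piecewise (by omega) hv'M, hv'sum]
    linarith
  have hnext := VStar_le_mpcCost hl hVf hcfeas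
  rw [hopt.VStar_eq]
  linarith

end

theorem closed_loop_lyapunov_estimate_general {n m : ℕ}
    (f : EuclideanSpace ℝ (Fin n) → EuclideanSpace ℝ (Fin m) → EuclideanSpace ℝ (Fin n))
    (X : Set (EuclideanSpace ℝ (Fin n))) (U : Set (EuclideanSpace ℝ (Fin m)))
    (Xf : Set (EuclideanSpace ℝ (Fin n)))
    (l : EuclideanSpace ℝ (Fin n) → EuclideanSpace ℝ (Fin m) → ℝ)
    (Vf : EuclideanSpace ℝ (Fin n) → ℝ)
    (N M : ℕ) (a : ℝ) (α₁ β : ℝ → ℝ)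
    (hl : ∀ y w, 0 ≤ l y w)
    (hVf : ∀ y, 0 ≤ Vf y)
    (hXfX : Xf ⊆ X)
    (hterm : ∀ y ∈ Xf, ∃ w ∈ U, f y w ∈ Xf ∧ Vf (f y w) ≤ Vf y - l y w)
    (ha1 : a < 1) (hM1 : 1 ≤ M) (hMN : M ≤ N)
    (hαl : ∀ y ∈ X, ∀ w ∈ U, α₁ ‖y‖ ≤ l y w)
    (hVβ : ∀ y : EuclideanSpace ℝ (Fin n), (∃ v, Feasible f X U Xf N y v) →
      VStar f X U Xf l Vf N y ≤ β ‖y‖)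
    (x : ℕ → EuclideanSpace ℝ (Fin n))
    (u : ℕ → ℕ → EuclideanSpace ℝ (Fin m))
    (vs : ℕ → ℕ → EuclideanSpace ℝ (Fin m))
    (zs : ℕ → ℕ → EuclideanSpace ℝ (Fin n))
    (hloop : ∀ k, OptPair f X U Xf l Vf N (x k) (vs k) (zs k) ∧
      Adm f X U l a M (x k) (vs k) (zs k) (u k) ∧ x (k + 1) = f (x k) (u k 0)) :
    ∀ k, α₁ ‖x k‖ ≤ β ‖x 0‖ := by
  have hlower : ∀ k, α₁ ‖x k‖ ≤ VStar f X U Xf l Vf N (x k) := fun k => by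
    have hopt := (hloop k).1
    have hx0 := hopt.1.1 0 (by omega)
    rw [hopt.VStar_eq]
    exact (hαl _ hx0.1 _ hx0.2).trans (l_le_mpcCost hl hVf (by omega))
  have hdecr : Antitone fun k => VStar f X U Xf l Vf N (x k) :=
    antitone_nat_of_succ_le fun k => by
      obtain ⟨hopt, hadm, hx⟩ := hloop k
      have hstep := hopt.VStar_next_add_le hl hVf hXfX hterm hM1 hMN hadm
      have hgain : 0 ≤ (1 - a) * l (x k) (u k 0) := mul_nonneg (by linarith) (hl _ _)
      rw [hx]
      linarith
  intro k
  calc α₁ ‖x k‖ ≤ VStar f X U Xf l Vf N (x k) := hlower k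
    _ ≤ VStar f X U Xf l Vf N (x 0) := hdecr (Nat.zero_le k)
    _ ≤ β ‖x 0‖ := hVβ _ ⟨vs 0, (hloop 0).1.1⟩

/-- Lyapunov stability estimate in Theorem 1(b): with comparison functions `α₁` and `β`,
the closed-loop trajectory satisfies `α₁(‖x(k)‖) ≤ β(‖x(0)‖)` for all `k`. -/
theorem closed_loop_lyapunov_estimate {n m : ℕ}
    (f : EuclideanSpace ℝ (Fin n) → EuclideanSpace ℝ (Fin m) → EuclideanSpace ℝ (Fin n))
    (X : Set (EuclideanSpace ℝ (Fin n))) (U : Set (EuclideanSpace ℝ (Fin m)))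
    (Xf : Set (EuclideanSpace ℝ (Fin n)))
    (l : EuclideanSpace ℝ (Fin n) → EuclideanSpace ℝ (Fin m) → ℝ)
    (Vf : EuclideanSpace ℝ (Fin n) → ℝ)
    (N M : ℕ) (a : ℝ) (α₁ β : ℝ → ℝ)
    (hl : ∀ y w, 0 ≤ l y w)
    (hVf : ∀ y, 0 ≤ Vf y)
    (hXfX : Xf ⊆ X)
    (hterm : ∀ y ∈ Xf, ∃ w ∈ U, f y w ∈ Xf ∧ Vf (f y w) ≤ Vf y - l y w)
    (ha0 : 0 ≤ a) (ha1 : a < 1) (hM1 : 1 ≤ M) (hMN : M ≤ N)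
    (hα : IsKFun α₁)
    (hαl : ∀ y ∈ X, ∀ w ∈ U, α₁ ‖y‖ ≤ l y w)
    (hβ : IsKFun β)
    (hVβ : ∀ y : EuclideanSpace ℝ (Fin n), (∃ v, Feasible f X U Xf N y v) →
      VStar f X U Xf l Vf N y ≤ β ‖y‖)
    (x : ℕ → EuclideanSpace ℝ (Fin n))
    (u : ℕ → ℕ → EuclideanSpace ℝ (Fin m))
    (vs : ℕ → ℕ → EuclideanSpace ℝ (Fin m))
    (zs : ℕ → ℕ → EuclideanSpace ℝ (Fin n))
    (hloop : ∀ k, OptPair f X U Xf l Vf N (x k) (vs k) (zs k) ∧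
      Adm f X U l a M (x k) (vs k) (zs k) (u k) ∧ x (k + 1) = f (x k) (u k 0)) :
    ∀ k, α₁ ‖x k‖ ≤ β ‖x 0‖ :=
  closed_loop_lyapunov_estimate_general f X U Xf l Vf N M a α₁ β hl hVf hXfX hterm ha1 hM1 hMN hαl
    hVβ x u vs zs hloop
end

section
/- (Proposition 3(b).) Let (v*, z*) be an optimal pair for P_N(x) with 1 ≤ M ≤ N, and suppose v* is the UNIQUE input sequence that is N-feasible from x and minimizes V_N(x, ·) over all N-feasible sequences (as guaranteed when the optimization problem P_N(x) is strictly convex). Then, for the parameter value a = 0, the safety–stability set degenerates to the singleton 𝕊(x) = { v*(0) }; in particular every (0,M)-admissible sequence u at x has u(0) = v*(0). -/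
/-!
Splicing an `(0, M)`-admissible sequence `u` in front of the tail `v*(M), v*(M+1), …` of the
optimal inputs gives an `N`-feasible sequence, because `u` steers `x` onto `z*(M)`; its cost
exceeds `V_N(x, v*)` by the difference of the first `M` stage costs, which is `≤ 0` for `a = 0`.
So the spliced sequence is again optimal, and uniqueness of the optimizer forces `u(0) = v*(0)`.
-/

section Splice

variable {S I : Type*} (f : S → I → S) (x : S)

def splice (M : ℕ) (u v : ℕ → I) : ℕ → I := fun i => if i < M then u i else v i

theorem traj_congr_of_lt {u v : ℕ → I} {k : ℕ} (h : ∀ i < k, u i = v i) :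
    traj f x u k = traj f x v k := by
  induction k with
  | zero => rfl
  | succ k ih => simp only [traj, ih fun i hi => h i (by omega), h k k.lt_succ_self]

theorem traj_congr_of_ge {u v : ℕ → I} {M : ℕ} (hM : traj f x u M = traj f x v M)
    (h : ∀ i ≥ M, u i = v i) {k : ℕ} (hk : M ≤ k) : traj f x u k = traj f x v k := by
  induction k, hk using Nat.le_induction with
  | base => exact hM
  | succ k hk ih => simp only [traj, ih, h k hk]

variable {M : ℕ} {u v : ℕ → I}

theorem splice_of_lt {i : ℕ} (hi : i < M) : splice M u v i = u i := if_pos hi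

theorem splice_of_ge {i : ℕ} (hi : M ≤ i) : splice M u v i = v i := if_neg (by omega)

theorem traj_splice_of_le {k : ℕ} (hk : k ≤ M) : traj f x (splice M u v) k = traj f x u k :=
  traj_congr_of_lt f x fun _ hi => splice_of_lt (by omega)

theorem traj_splice_of_ge (hM : traj f x u M = traj f x v M) {k : ℕ} (hk : M ≤ k) :
    traj f x (splice M u v) k = traj f x v k :=
  traj_congr_of_ge f x ((traj_splice_of_le f x le_rfl).trans hM) (fun _ => splice_of_ge) hk

theorem feasible_splice {X : Set S} {U : Set I} {Xf : Set S} {N : ℕ} (hMN : M ≤ N)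
    (hu : ∀ i < M, traj f x u i ∈ X ∧ u i ∈ U) (hv : Feasible f X U Xf N x v)
    (hM : traj f x u M = traj f x v M) : Feasible f X U Xf N x (splice M u v) := by
  refine ⟨fun i hi => ?_, ?_⟩
  · rcases lt_or_ge i M with hiM | hiM
    · rw [traj_splice_of_le f x hiM.le, splice_of_lt hiM]
      exact hu i hiM
    · rw [traj_splice_of_ge f x hM hiM, splice_of_ge hiM]
      exact hv.1 i hi
  · rw [traj_splice_of_ge f x hM hMN]
    exact hv.2

theorem mpcCost_splice (l : S → I → ℝ) (Vf : S → ℝ) {N : ℕ} (hMN : M ≤ N)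
    (hM : traj f x u M = traj f x v M) :
    mpcCost f l Vf N x (splice M u v) + ∑ i ∈ Finset.range M, l (traj f x v i) (v i) =
      mpcCost f l Vf N x v + ∑ i ∈ Finset.range M, l (traj f x u i) (u i) := by
  have head : ∑ i ∈ Finset.range M, l (traj f x (splice M u v) i) (splice M u v i) =
      ∑ i ∈ Finset.range M, l (traj f x u i) (u i) :=
    Finset.sum_congr rfl fun i hi => by
      rw [Finset.mem_range] at hi
      rw [traj_splice_of_le f x hi.le, splice_of_lt hi]
  have tail : ∑ i ∈ Finset.Ico M N, l (traj f x (splice M u v) i) (splice M u v i) =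
      ∑ i ∈ Finset.Ico M N, l (traj f x v i) (v i) :=
    Finset.sum_congr rfl fun i hi => by
      rw [traj_splice_of_ge f x hM (Finset.mem_Ico.1 hi).1, splice_of_ge (Finset.mem_Ico.1 hi).1]
  simp only [mpcCost, ← Finset.sum_range_add_sum_Ico _ hMN, head, tail,
    traj_splice_of_ge f x hM hMN]
  ring

end Splice

section Optimal

variable {S I : Type*} {f : S → I → S} {X : Set S} {U : Set I} {Xf : Set S}
  {l : S → I → ℝ} {Vf : S → ℝ} {N M : ℕ} {x : S} {v : ℕ → I} {z : ℕ → S}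

theorem OptPair.sum_stage_cost_eq (h : OptPair f X U Xf l Vf N x v z) (M : ℕ) :
    ∑ i ∈ Finset.range M, l (z i) (v i) = ∑ i ∈ Finset.range M, l (traj f x v i) (v i) :=
  Finset.sum_congr rfl fun i _ => by rw [h.2.1 i]

theorem OptPair.adm_self (h : OptPair f X U Xf l Vf N x v z) (hMN : M ≤ N) :
    Adm f X U l 0 M x v z v :=
  ⟨fun i hi => h.1.1 i (by omega), by rw [h.sum_stage_cost_eq, sub_self, zero_mul],
    (h.2.1 M).symm⟩

theorem OptPair.splice_of_adm (h : OptPair f X U Xf l Vf N x v z) (hMN : M ≤ N)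
    {u : ℕ → I} (hu : Adm f X U l 0 M x v z u) :
    OptPair f X U Xf l Vf N x (splice M u v) (traj f x (splice M u v)) := by
  obtain ⟨hsafe, hcost, hend⟩ := hu
  have hM : traj f x u M = traj f x v M := hend.trans (h.2.1 M)
  have hle : mpcCost f l Vf N x (splice M u v) ≤ mpcCost f l Vf N x v := by
    have := mpcCost_splice f x l Vf hMN hM
    rw [zero_mul, h.sum_stage_cost_eq] at hcost
    linarith
  exact ⟨feasible_splice f x hMN hsafe h.1 hM, fun _ => rfl,
    fun w hw => hle.trans (h.2.2 w hw)⟩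

end Optimal

/-- Proposition 3(b): if the nominal optimizer is unique (e.g. under strict convexity),
then for `a = 0` the safety–stability set degenerates to the singleton `{v*(0)}`. -/
theorem sset_singleton_a_zero {n m : ℕ}
    (f : EuclideanSpace ℝ (Fin n) → EuclideanSpace ℝ (Fin m) → EuclideanSpace ℝ (Fin n))
    (X : Set (EuclideanSpace ℝ (Fin n))) (U : Set (EuclideanSpace ℝ (Fin m)))
    (Xf : Set (EuclideanSpace ℝ (Fin n)))
    (l : EuclideanSpace ℝ (Fin n) → EuclideanSpace ℝ (Fin m) → ℝ)
    (Vf : EuclideanSpace ℝ (Fin n) → ℝ)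
    (N M : ℕ) (x : EuclideanSpace ℝ (Fin n))
    (vs : ℕ → EuclideanSpace ℝ (Fin m)) (zs : ℕ → EuclideanSpace ℝ (Fin n))
    (hM1 : 1 ≤ M) (hMN : M ≤ N)
    (hopt : OptPair f X U Xf l Vf N x vs zs)
    (huniq : ∀ w, Feasible f X U Xf N x w →
      (∀ v', Feasible f X U Xf N x v' → mpcCost f l Vf N x w ≤ mpcCost f l Vf N x v') →
      ∀ i < N, w i = vs i) :
    S2Set f X U l 0 M x vs zs = {vs 0} ∧
    ∀ u, Adm f X U l 0 M x vs zs u → u 0 = vs 0 := by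
  have head_eq : ∀ u, Adm f X U l 0 M x vs zs u → u 0 = vs 0 := by
    intro u hu
    obtain ⟨hfeas, -, hmin⟩ := hopt.splice_of_adm hMN hu
    rw [← splice_of_lt (u := u) (v := vs) hM1]
    exact huniq _ hfeas hmin 0 (by omega)
  refine ⟨Set.eq_singleton_iff_unique_mem.2 ⟨⟨vs, hopt.adm_self hMN, rfl⟩, ?_⟩, head_eq⟩
  rintro _ ⟨u, hu, rfl⟩
  exact head_eq u hu
end
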